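/- arXiv:1602.01233 — 5 statements merged into one kernel-verified Lean document; each statement's English description precedes it below -/
import Mathlib

section
/- Let $p>2$ be a prime. Then the valuation ring $\mathbb{Z}_p$ of the $p$-adic valuation on $\mathbb{Q}_p$ equals the set of $x \in \mathbb{Q}_p$ such that there exists $y \in \mathbb{Q}_p$ with $y^2 = 1 + p x^2$. -/
/-!
If `‖x‖ ≤ 1` then `1 + p x²` is congruent to `1` modulo `p`, and Hensel's lemma lifts the square
root `1` of it (the derivative `2` of `X² - a` is a unit since `p` is odd). If `‖x‖ > 1` then
`p x²` dominates `1`, so `1 + p x²` has the odd valuation `1 + 2 v(x)` and cannot be a square.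
-/

open Polynomial

variable {p : ℕ} [Fact p.Prime]

namespace PadicInt

lemma norm_two_eq_one (hp : p ≠ 2) : ‖(2 : ℤ_[p])‖ = 1 := by
  have hcop : p.Coprime 2 := (Nat.coprime_primes Fact.out Nat.prime_two).mpr hp
  have := Padic.norm_natCast_eq_one_iff.mpr hcop
  rwa [Nat.cast_ofNat] at this

lemma isSquare_of_norm_sub_one_lt (hp : p ≠ 2) {a : ℤ_[p]} (ha : ‖a - 1‖ < 1) :
    IsSquare a := by
  have hnorm : ‖(X ^ 2 - C a).aeval (1 : ℤ_[p])‖ <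
      ‖(X ^ 2 - C a).derivative.aeval (1 : ℤ_[p])‖ ^ 2 := by
    simpa [norm_sub_rev, one_add_one_eq_two, norm_two_eq_one hp] using ha
  obtain ⟨z, hz, -⟩ := hensels_lemma hnorm
  exact ⟨z, by simpa [sub_eq_zero, sq, eq_comm] using hz⟩

end PadicInt

namespace Padic

lemma isSquare_of_norm_sub_one_lt (hp : p ≠ 2) {a : ℚ_[p]} (ha : ‖a - 1‖ < 1) :
    IsSquare a := by
  have ha1 : ‖a‖ ≤ 1 := (norm_eq_of_norm_sub_lt_right (by rwa [norm_one])).trans norm_one |>.le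
  obtain ⟨r, hr⟩ := PadicInt.isSquare_of_norm_sub_one_lt hp (a := ⟨a, ha1⟩) ha
  exact ⟨r, by simpa using congrArg ((↑) : ℤ_[p] → ℚ_[p]) hr⟩

lemma even_valuation_of_isSquare {a : ℚ_[p]} (ha : IsSquare a) : Even a.valuation := by
  obtain ⟨r, rfl⟩ := ha
  simp [← sq, valuation_pow]

lemma valuation_eq_of_norm_eq {x y : ℚ_[p]} (h : ‖x‖ = ‖y‖) : x.valuation = y.valuation := by
  rcases eq_or_ne x 0 with rfl | hx
  · rw [norm_zero, eq_comm, norm_eq_zero] at h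
    rw [h]
  have hy : y ≠ 0 := by rintro rfl; simp_all
  rw [norm_eq_zpow_neg_valuation hx, norm_eq_zpow_neg_valuation hy] at h
  have hp1 : (1 : ℝ) < p := by exact_mod_cast (Fact.out : p.Prime).one_lt
  simpa using zpow_right_injective₀ (by positivity) hp1.ne' h

lemma valuation_add_of_norm_lt {x y : ℚ_[p]} (h : ‖x‖ < ‖y‖) :
    (x + y).valuation = y.valuation := by
  apply valuation_eq_of_norm_eq
  rw [add_eq_max_of_ne h.ne, max_eq_right h.le]

lemma isSquare_one_add_p_mul_sq (hp : p ≠ 2) {x : ℚ_[p]} (hx : ‖x‖ ≤ 1) :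
    IsSquare (1 + p * x ^ 2) := by
  have hpx : ‖(p : ℚ_[p]) * x ^ 2‖ < 1 := by
    rw [norm_mul, norm_pow]
    exact mul_lt_one_of_nonneg_of_lt_one_left (norm_nonneg _) norm_p_lt_one
      (pow_le_one₀ (norm_nonneg _) hx)
  exact isSquare_of_norm_sub_one_lt hp (by rwa [add_sub_cancel_left])

lemma norm_le_one_of_isSquare_one_add_p_mul_sq {x : ℚ_[p]} (h : IsSquare (1 + p * x ^ 2)) :
    ‖x‖ ≤ 1 := by
  by_contra! hx
  have hx0 : x ≠ 0 := by rintro rfl; norm_num at hx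
  have hvx : x.valuation < 0 := by
    rw [← not_le, norm_le_one_iff_val_nonneg] at hx
    omega
  have hvpx : ((p : ℚ_[p]) * x ^ 2).valuation = 1 + 2 * x.valuation := by
    rw [valuation_mul (by exact_mod_cast (Fact.out : p.Prime).ne_zero) (pow_ne_zero 2 hx0),
      valuation_p, valuation_pow]
    push_cast; ring
  have hpx : ‖(1 : ℚ_[p])‖ < ‖(p : ℚ_[p]) * x ^ 2‖ := by
    rw [norm_one, ← not_le, norm_le_one_iff_val_nonneg]
    omega
  obtain ⟨k, hk⟩ := even_valuation_of_isSquare h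
  rw [valuation_add_of_norm_lt hpx, hvpx] at hk
  omega

end Padic

/-- Julia Robinson's existential definition: for a prime `p > 2`, the valuation ring
`ℤ_p ⊆ ℚ_p` is the set of `x` such that `1 + p * x ^ 2` is a square in `ℚ_p`. -/
theorem stmt_0 (p : ℕ) [Fact p.Prime] (hp : 2 < p) (x : ℚ_[p]) :
    ‖x‖ ≤ 1 ↔ ∃ y : ℚ_[p], y ^ 2 = 1 + (p : ℚ_[p]) * x ^ 2 := by
  constructor
  · intro hx
    obtain ⟨y, hy⟩ := Padic.isSquare_one_add_p_mul_sq hp.ne' hx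
    exact ⟨y, by rw [hy, sq]⟩
  · rintro ⟨y, hy⟩
    exact Padic.norm_le_one_of_isSquare_one_add_p_mul_sq ⟨y, hy ▸ sq y⟩
end

section
/- Let $F$ be a separably closed field and let $v$ be a nontrivial valuation on $F$. Then the residue field $Fv$ is algebraically closed. -/
open Polynomial IsLocalRing

set_option synthInstance.maxHeartbeats 1000000
set_option maxHeartbeats 2000000

section Aux

variable {F : Type*} [Field F] (O : ValuationSubring F)

/-- If `x : F` is not in `O` then `x⁻¹` lies in `O` and is a nonunit. -/
lemma aux_inv_mem (x : F) (hx : x ∉ O) :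
    ∃ y : O, (y : F) = x⁻¹ ∧ ¬ IsUnit y := by
  have hxi : x⁻¹ ∈ O := (O.mem_or_inv_mem x).resolve_left hx
  have hx0 : x ≠ 0 := fun h => hx (h ▸ O.zero_mem)
  refine ⟨⟨x⁻¹, hxi⟩, rfl, fun hu => ?_⟩
  obtain ⟨w, hw⟩ := isUnit_iff_exists_inv.mp hu
  apply hx
  have h2 := congrArg (Subtype.val) hw
  push_cast at h2
  field_simp at h2
  exact h2 ▸ w.2

/-- There is a nonzero nonunit in a proper valuation subring. -/
lemma aux_exists_nonunit (hO : O ≠ ⊤) : ∃ t : O, t ≠ 0 ∧ ¬ IsUnit t := by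
  have : ∃ x : F, x ∉ O := by
    by_contra h
    push_neg at h
    exact hO (by ext x; simp [h x, ValuationSubring.mem_top])
  obtain ⟨x, hx⟩ := this
  have hx0 : x ≠ 0 := fun h => hx (h ▸ O.zero_mem)
  obtain ⟨y, hyF, hyu⟩ := aux_inv_mem O x hx
  refine ⟨y, fun h => ?_, hyu⟩
  rw [h] at hyF
  exact hx0 (by simpa using (inv_eq_zero.mp hyF.symm))

/-- An element of `O` is sent to zero by the residue map iff it is a nonunit. -/
lemma aux_residue_eq_zero {t : O} (h : ¬ IsUnit t) : IsLocalRing.residue O t = 0 := by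
  rwa [IsLocalRing.residue_eq_zero_iff, IsLocalRing.mem_maximalIdeal, mem_nonunits_iff]

end Aux

/-- The residue field of a nontrivial valuation on a separably closed field is
algebraically closed. -/
theorem stmt_2 {F : Type*} [Field F] [IsSepClosed F]
    (O : ValuationSubring F) (hO : O ≠ ⊤) :
    IsAlgClosed (IsLocalRing.ResidueField ↥O) := by
  classical
  obtain ⟨t, ht0, htu⟩ := aux_exists_nonunit O hO
  have htres : residue O t = 0 := aux_residue_eq_zero O htu
  set k := IsLocalRing.ResidueField ↥O with hk
  have hφinj : Function.Injective (algebraMap O F) := Subtype.val_injective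
  have htF : (algebraMap O F) t ≠ 0 := fun h => ht0 (hφinj (by simpa using h))
  -- a criterion for membership in O
  have hmem : ∀ (x : F) (P : (↥O)[X]), P.Monic → 0 < P.natDegree →
      Polynomial.eval x (P.map (algebraMap O F)) = 0 → ∃ x₀ : O, algebraMap O F x₀ = x := by
    intro x P hPm hPd hPx
    have hint : IsIntegral O x := ⟨P, hPm, by rwa [← Polynomial.eval_map]⟩
    exact IsIntegrallyClosed.isIntegral_iff.mp hint
  -- Step 1 : the residue field is separably closed
  have hsepcl : IsSepClosed k := by
    apply IsSepClosed.of_exists_root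
    intro q hqm hqirr hqsep
    -- lift q to a monic polynomial over O
    obtain ⟨Q, hQmap, hQdeg, hQm⟩ :=
      Polynomial.lifts_and_degree_eq_and_monic
        (by
          obtain ⟨Q0, hQ0⟩ := Polynomial.map_surjective _ (residue_surjective (R := ↥O)) q
          exact ⟨Q0, hQ0⟩) hqm
    have hqdeg : q.degree ≠ 0 := (Polynomial.degree_pos_of_irreducible hqirr).ne'
    set QF : F[X] := Q.map (algebraMap O F) with hQF
    have hQFdeg : QF.degree = q.degree := by
      rw [hQF, Polynomial.degree_map_eq_of_injective hφinj, hQdeg]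
    have hq' : q.derivative ≠ 0 := by
      rw [← Polynomial.separable_iff_derivative_ne_zero hqirr]; exact hqsep
    have hQF' : QF.derivative ≠ 0 := by
      intro h
      apply hq'
      have hQ' : Q.derivative = 0 := by
        have := congrArg (Polynomial.map (algebraMap O F)) (rfl : Q.derivative = Q.derivative)
        rw [hQF, Polynomial.derivative_map] at h
        exact Polynomial.map_injective _ hφinj (by simpa using h)
      rw [← hQmap, Polynomial.derivative_map, hQ', Polynomial.map_zero]
    -- choose a small perturbation constant avoiding roots of the derivative
    set K := AlgebraicClosure F
    set ψ : F →+* K := algebraMap F K with hψ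
    set T : Multiset K := ((QF.derivative.map ψ).roots.map fun a => -Polynomial.aeval a QF)
      with hT
    have hpow : ∀ a b : ℕ, a < b → t ^ (a + 1) ≠ t ^ (b + 1) := by
      intro a b hlt heq
      have h1 : t ^ (a + 1) * 1 = t ^ (a + 1) * t ^ (b - a) := by
        rw [mul_one, ← pow_add]
        rw [heq]
        congr 1
        omega
      have h2 : (1 : O) = t ^ (b - a) := mul_left_cancel₀ (pow_ne_zero _ ht0) h1
      exact htu (IsUnit.of_pow_eq_one h2.symm (by omega))
    have hinj : Function.Injective fun n : ℕ => ψ (algebraMap O F (t ^ (n + 1))) := by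
      intro a b hab
      simp only at hab
      have h := hφinj (ψ.injective hab)
      rcases lt_trichotomy a b with h' | h' | h'
      · exact absurd h (hpow a b h')
      · exact h'
      · exact absurd h.symm (hpow b a h')
    obtain ⟨y, hyrange, hyT⟩ :=
      ((Set.infinite_range_of_injective hinj).diff T.toFinset.finite_toSet).nonempty
    obtain ⟨n, rfl⟩ := hyrange
    set c : O := t ^ (n + 1) with hc
    have hcres : residue O c = 0 := by rw [hc, map_pow, htres, zero_pow (by omega)]
    set g : F[X] := QF + C (algebraMap O F c) with hg
    have hgderiv : g.derivative = QF.derivative := by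
      rw [hg, Polynomial.derivative_add, Polynomial.derivative_C, add_zero]
    have hgdeg : g.degree = q.degree := by
      rw [hg, ← hQFdeg]
      rcases eq_or_ne ((algebraMap O F) c) 0 with h | h
      · rw [h, map_zero, add_zero]
      · exact Polynomial.degree_add_eq_left_of_degree_lt
          (lt_of_le_of_lt (Polynomial.degree_C_le) (by
            rw [hQFdeg]
            exact Polynomial.degree_pos_of_irreducible hqirr))
    have hgsep : g.Separable := by
      rw [Polynomial.separable_def, hgderiv]
      refine (Polynomial.isCoprime_iff_aeval_ne_zero_of_isAlgClosed (k := F) K g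
        (Polynomial.derivative QF)).mpr ?_
      intro a
      by_cases ha : Polynomial.aeval a QF.derivative = 0
      · left
        have haroot : a ∈ (QF.derivative.map ψ).roots := by
          rw [Polynomial.mem_roots']
          refine ⟨(Polynomial.map_ne_zero_iff ψ.injective).mpr hQF', ?_⟩
          rwa [Polynomial.IsRoot, Polynomial.eval_map, ← Polynomial.aeval_def]
        have hmemT : -Polynomial.aeval a QF ∈ T := by
          rw [hT]
          exact Multiset.mem_map_of_mem _ haroot
        intro h0
        have heq : ψ ((algebraMap O F) c) = -Polynomial.aeval a QF := by
          have h1 := h0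
          rw [hg, map_add, Polynomial.aeval_C] at h1
          have h2 : Polynomial.aeval a QF = -(algebraMap F K) ((algebraMap O F) c) := by
            linear_combination h1
          rw [h2, hψ, neg_neg]
        apply hyT
        show ψ ((algebraMap O F) c) ∈ (T.toFinset : Set K)
        rw [Finset.mem_coe, Multiset.mem_toFinset, heq]
        exact hmemT
      · right
        exact ha
    have hgdeg0 : g.degree ≠ 0 := by rw [hgdeg]; exact hqdeg
    obtain ⟨r, hr⟩ := IsSepClosed.exists_root g hgdeg0 hgsep
    -- r is integral over O
    have hrmap : Polynomial.eval r ((Q + C c).map (algebraMap O F)) = 0 := by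
      rw [Polynomial.map_add, Polynomial.map_C]
      exact hr
    have hQCm : (Q + C c).Monic := by
      apply Polynomial.Monic.add_of_left hQm
      apply lt_of_le_of_lt (Polynomial.degree_C_le)
      rw [hQdeg]
      exact Polynomial.degree_pos_of_irreducible hqirr
    have hQCd : 0 < (Q + C c).natDegree := by
      have h2 : (Q + C c).degree = Q.degree := by
        rcases eq_or_ne c 0 with hc0 | hc0
        · rw [hc0, Polynomial.C_0, add_zero]
        · exact Polynomial.degree_add_eq_left_of_degree_lt
            (lt_of_le_of_lt (Polynomial.degree_C_le) (by
              rw [hQdeg]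
              exact Polynomial.degree_pos_of_irreducible hqirr))
      rw [Polynomial.natDegree_pos_iff_degree_pos, h2, hQdeg]
      exact Polynomial.degree_pos_of_irreducible hqirr
    obtain ⟨r₀, hr₀⟩ := hmem r (Q + C c) hQCm hQCd hrmap
    refine ⟨residue O r₀, ?_⟩
    -- compute the evaluation in the residue field
    have heval : Polynomial.eval r₀ (Q + C c) = 0 := by
      apply hφinj
      rw [map_zero]
      calc (algebraMap O F) (Polynomial.eval r₀ (Q + C c))
          = Polynomial.eval ((algebraMap O F) r₀) ((Q + C c).map (algebraMap O F)) := by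
            rw [Polynomial.eval_map, Polynomial.eval₂_hom]
        _ = 0 := by rw [hr₀]; exact hrmap
    have : Polynomial.eval (residue O r₀) q = residue O (Polynomial.eval r₀ Q) := by
      rw [← hQmap, Polynomial.eval_map, Polynomial.eval₂_hom]
    rw [this]
    have h3 : Polynomial.eval r₀ Q = -c := by
      have := heval
      rw [Polynomial.eval_add, Polynomial.eval_C] at this
      linear_combination this
    rw [h3, map_neg, hcres, neg_zero]
  -- Step 2 : the residue field is perfect
  haveI : PerfectField k := by
    set p := ringChar k with hp
    haveI : CharP k p := ringChar.charP k
    rcases CharP.char_is_prime_or_zero k p with hprime | hzero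
    · haveI : Fact p.Prime := ⟨hprime⟩
      haveI : ExpChar k p := ExpChar.prime hprime
      haveI : PerfectRing k p := by
        apply PerfectRing.ofSurjective
        intro abar
        obtain ⟨a, rfl⟩ := residue_surjective (R := ↥O) abar
        by_cases hpF : (p : F) = 0
        · -- equal characteristic: Artin-Schreier style trick
          obtain ⟨x, hx⟩ := IsSepClosed.exists_root_C_mul_X_pow_add_C_mul_X_add_C
            (1 : F) (-(algebraMap O F t)) (-(algebraMap O F a)) hpF hprime.two_le
            (neg_ne_zero.mpr htF)
          have hx' : x ^ p = (algebraMap O F t) * x + (algebraMap O F a) := by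
            linear_combination hx
          have hxO : x ∈ O := by
            by_contra hxnot
            obtain ⟨y, hyF, hyu⟩ := aux_inv_mem O x hxnot
            have hx0 : x ≠ 0 := fun h0 => hxnot (h0 ▸ O.zero_mem)
            have hyF' : algebraMap O F y = x⁻¹ := hyF
            have h0 : (x⁻¹) ^ p * x ^ p = 1 := by
              rw [← mul_pow, inv_mul_cancel₀ hx0, one_pow]
            have h1 : (x⁻¹) ^ p * x = (x⁻¹) ^ (p - 1) := by
              have hps : p - 1 + 1 = p := by
                have := hprime.two_le; omega
              conv_lhs => rw [← hps]
              rw [pow_succ, mul_assoc, inv_mul_cancel₀ hx0, mul_one]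
            have key : (1 : F) = (algebraMap O F t) * (x⁻¹) ^ (p - 1)
                + (algebraMap O F a) * (x⁻¹) ^ p := by
              calc (1 : F) = (x⁻¹) ^ p * x ^ p := h0.symm
                _ = (x⁻¹) ^ p * ((algebraMap O F t) * x + (algebraMap O F a)) := by rw [hx']
                _ = (algebraMap O F t) * ((x⁻¹) ^ p * x)
                    + (algebraMap O F a) * (x⁻¹) ^ p := by ring
                _ = _ := by rw [h1]
            have hkey : (1 : O) = t * y ^ (p - 1) + a * y ^ p := by
              apply hφinj
              rw [map_one, map_add, map_mul, map_mul, map_pow, map_pow, hyF']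
              exact key
            have : IsUnit (t * y ^ (p - 1) + a * y ^ p) := hkey ▸ isUnit_one
            have hyn : ¬ IsUnit y := hyu
            have hmem' : t * y ^ (p - 1) + a * y ^ p ∈ maximalIdeal O := by
              apply Ideal.add_mem
              · exact Ideal.mul_mem_left _ _ (Ideal.pow_mem_of_mem _
                  (by rwa [mem_maximalIdeal, mem_nonunits_iff]) _
                  (by have := hprime.two_le; omega))
              · exact Ideal.mul_mem_left _ _ (Ideal.pow_mem_of_mem _
                  (by rwa [mem_maximalIdeal, mem_nonunits_iff]) _ hprime.pos)
            exact (maximalIdeal.isMaximal O).ne_top (Ideal.eq_top_of_isUnit_mem _ hmem' this)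
          obtain ⟨x₀, hx₀⟩ : ∃ x₀ : O, algebraMap O F x₀ = x := ⟨⟨x, hxO⟩, rfl⟩
          refine ⟨residue O x₀, ?_⟩
          have hOeq : x₀ ^ p = t * x₀ + a := by
            apply hφinj
            rw [map_pow, map_add, map_mul, hx₀]
            exact hx' 
          have : frobenius k p (residue O x₀) = residue O (x₀ ^ p) := by
            rw [frobenius_def, map_pow]
          rw [this, hOeq, map_add, map_mul, htres, zero_mul, zero_add]
        · -- residue characteristic different from that of F
          by_cases ha0 : residue O a = 0
          · refine ⟨0, ?_⟩
            rw [frobenius_def, zero_pow hprime.ne_zero, ha0]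
          · have haO : a ≠ 0 := fun h => ha0 (by rw [h, map_zero])
            have haF : (algebraMap O F) a ≠ 0 := fun h => haO (hφinj (by simpa using h))
            have hsep : (X ^ p - C ((algebraMap O F) a)).Separable :=
              Polynomial.separable_X_pow_sub_C _ hpF haF
            have hdeg : (X ^ p - C ((algebraMap O F) a)).degree ≠ 0 := by
              rw [Polynomial.degree_X_pow_sub_C hprime.pos]
              exact_mod_cast hprime.ne_zero ∘ fun h => by exact_mod_cast h
            obtain ⟨x, hx⟩ := IsSepClosed.exists_root _ hdeg hsep
            have hx' : x ^ p = (algebraMap O F a) := by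
              have := hx
              rw [Polynomial.IsRoot, Polynomial.eval_sub, Polynomial.eval_pow,
                Polynomial.eval_X, Polynomial.eval_C, sub_eq_zero] at this
              exact this
            have hxO : x ∈ O := by
              by_contra hxnot
              obtain ⟨y, hyF, hyu⟩ := aux_inv_mem O x hxnot
              have hx0 : x ≠ 0 := fun h0 => hxnot (h0 ▸ O.zero_mem)
              have hyF' : algebraMap O F y = x⁻¹ := hyF
              have hkey : (1 : O) = a * y ^ p := by
                apply hφinj
                rw [map_one, map_mul, map_pow, hyF', ← hx']
                rw [← mul_pow, mul_inv_cancel₀ hx0, one_pow]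
              have : IsUnit (a * y ^ p) := hkey ▸ isUnit_one
              have hmem' : a * y ^ p ∈ maximalIdeal O :=
                Ideal.mul_mem_left _ _ (Ideal.pow_mem_of_mem _
                  (by rw [mem_maximalIdeal, mem_nonunits_iff]; exact hyu) _ hprime.pos)
              exact (maximalIdeal.isMaximal O).ne_top (Ideal.eq_top_of_isUnit_mem _ hmem' this)
            obtain ⟨x₀, hx₀⟩ : ∃ x₀ : O, algebraMap O F x₀ = x := ⟨⟨x, hxO⟩, rfl⟩
            refine ⟨residue O x₀, ?_⟩
            have hOeq : x₀ ^ p = a := by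
              apply hφinj
              rw [map_pow, hx₀]
              exact hx' 
            rw [frobenius_def, ← map_pow, hOeq]
      exact PerfectRing.toPerfectField k p
    · haveI : CharP k 0 := hzero ▸ (ringChar.charP k)
      haveI : CharZero k := CharP.charP_to_charZero k
      infer_instance
  exact IsSepClosed.isAlgClosed_of_perfectField k
end

section
/- Let $F_1$ be a field elementarily equivalent to $\mathbb{Q}$ (in the language of rings). Then the set of sums of four squares in $F_1$ is the positive cone of an ordering on $F_1$, and this is the unique ordering of $F_1$. -/
/-!
For a set defined by a first-order formula in one variable, being the positive cone of an
ordering is expressed by a first-order sentence, and the sums of four squares form such a set.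
In `ℚ` they are exactly the nonnegative rationals by Lagrange's four squares theorem, so the
sentence holds in `ℚ` and transfers to `F₁`. Uniqueness holds in any field: an ordering cone
contains every square, hence every sum of four squares, and an ordering cone cannot properly
contain another one.
-/

open FirstOrder

/-- Two rings are elementarily equivalent in the language of rings. -/
def RingElemEquiv (F₁ : Type*) (F₂ : Type*) [Ring F₁] [Ring F₂] : Prop :=
  letI := Ring.compatibleRingOfRing F₁
  letI := Ring.compatibleRingOfRing F₂
  F₁ ≅[Language.ring] F₂

/-- `P` is the positive cone of a (field) ordering on `F`. -/
def IsOrderingCone {F : Type*} [Field F] (P : Set F) : Prop :=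
  (∀ x ∈ P, ∀ y ∈ P, x + y ∈ P) ∧ (∀ x ∈ P, ∀ y ∈ P, x * y ∈ P) ∧
    (∀ x : F, x ∈ P ∨ -x ∈ P) ∧ (∀ x : F, x ∈ P → -x ∈ P → x = 0)

open FirstOrder Language Ring

def sumFourSquares (R : Type*) [Semiring R] : Set R :=
  {x | ∃ a b c d : R, x = a ^ 2 + b ^ 2 + c ^ 2 + d ^ 2}

namespace IsOrderingCone

variable {F : Type*} [Field F] {P Q : Set F}

theorem sq_mem (hP : IsOrderingCone P) (x : F) : x ^ 2 ∈ P := by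
  obtain ⟨-, hmul, htot, -⟩ := hP
  rcases htot x with h | h
  · simpa [sq] using hmul x h x h
  · simpa [sq] using hmul _ h _ h

theorem sumFourSquares_subset (hP : IsOrderingCone P) : sumFourSquares F ⊆ P := by
  rintro _ ⟨a, b, c, d, rfl⟩
  have hadd := hP.1
  exact hadd _ (hadd _ (hadd _ (hP.sq_mem a) _ (hP.sq_mem b)) _ (hP.sq_mem c)) _ (hP.sq_mem d)

theorem eq_of_subset (hP : IsOrderingCone P) (hQ : IsOrderingCone Q) (h : P ⊆ Q) : P = Q := by
  refine h.antisymm fun x hxQ => ?_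
  rcases hP.2.2.1 x with hxP | hxP
  · exact hxP
  · rw [hQ.2.2.2 x hxQ (h hxP)]
    simpa using hP.sq_mem 0

end IsOrderingCone

theorem isOrderingCone_nonneg (K : Type*) [Field K] [LinearOrder K] [IsStrictOrderedRing K] :
    IsOrderingCone {x : K | 0 ≤ x} :=
  ⟨fun _ hx _ hy => add_nonneg hx hy, fun _ hx _ hy => mul_nonneg hx hy,
    fun x => (le_total 0 x).imp id neg_nonneg.2, fun _ hx hnx => le_antisymm (neg_nonneg.1 hnx) hx⟩

theorem Rat.sumFourSquares_eq : sumFourSquares ℚ = {q | 0 ≤ q} := by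
  ext q
  constructor
  · rintro ⟨a, b, c, d, rfl⟩
    show (0 : ℚ) ≤ _
    positivity
  · intro hq
    -- `q = q.num * q.den / q.den ^ 2`, and the numerator is a natural number.
    have hnum : 0 ≤ q.num * q.den := mul_nonneg (Rat.num_nonneg.2 hq) (Int.natCast_nonneg _)
    obtain ⟨a, b, c, d, habcd⟩ := Nat.sum_four_squares (q.num * q.den).toNat
    refine ⟨a / q.den, b / q.den, c / q.den, d / q.den, ?_⟩
    have : ((a ^ 2 + b ^ 2 + c ^ 2 + d ^ 2 : ℕ) : ℚ) = q * q.den ^ 2 := by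
      rw [habcd, ← Int.cast_natCast, Int.toNat_of_nonneg hnum]
      push_cast
      rw [← Rat.mul_den_eq_num]
      ring
    push_cast at this
    field_simp
    linear_combination -this

noncomputable def sumFourSquaresFormula : Language.ring.Formula Unit :=
  Formula.iExs (Fin 4) <| Term.equal (var (Sum.inl ()))
    (termOfFreeCommRing (∑ i, FreeCommRing.of (Sum.inr i) ^ 2))

theorem setOf_realize_sumFourSquaresFormula (R : Type*) [CommRing R] [CompatibleRing R] :
    {x : R | sumFourSquaresFormula.Realize fun _ => x} = sumFourSquares R := by
  ext
  simp [sumFourSquaresFormula, sumFourSquares, Fin.exists_fin_succ_pi, Fin.sum_univ_succ, add_assoc]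

noncomputable def orderingConeSentence (φ : Language.ring.Formula Unit) : Language.ring.Sentence :=
  let mem (t : Language.ring.Term (Empty ⊕ Fin 2)) := φ.subst fun _ => t
  let x := var (Sum.inr 0)
  let y := var (Sum.inr 1)
  Formula.iAlls (Fin 2) <|
    ((mem x ⊓ mem y).imp (mem (x + y))) ⊓ ((mem x ⊓ mem y).imp (mem (x * y))) ⊓
      (mem x ⊔ mem (-x)) ⊓ ((mem x ⊓ mem (-x)).imp (Term.equal x 0))

theorem realize_orderingConeSentence {F : Type*} [Field F] [CompatibleRing F]
    (φ : Language.ring.Formula Unit) :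
    F ⊨ orderingConeSentence φ ↔ IsOrderingCone {x : F | φ.Realize fun _ => x} := by
  have realize_mem (t : Language.ring.Term (Empty ⊕ Fin 2)) (v : Empty ⊕ Fin 2 → F) :
      Formula.Realize (φ.subst fun _ => t) v ↔ φ.Realize fun _ => t.realize v :=
    BoundedFormula.realize_subst
  simp [orderingConeSentence, Sentence.Realize, realize_mem, Fin.forall_fin_succ_pi, forall_and,
    IsOrderingCone, and_assoc, imp_forall_iff]

theorem RingElemEquiv.isOrderingCone_sumFourSquares_iff {F K : Type*} [Field F] [Field K]
    (h : RingElemEquiv F K) :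
    IsOrderingCone (sumFourSquares F) ↔ IsOrderingCone (sumFourSquares K) := by
  let := compatibleRingOfRing F
  let := compatibleRingOfRing K
  rw [← setOf_realize_sumFourSquaresFormula F, ← setOf_realize_sumFourSquaresFormula K,
    ← realize_orderingConeSentence, ← realize_orderingConeSentence]
  exact h.realize_sentence _

/-- In a field elementarily equivalent to `ℚ`, the set of sums of four squares is the positive
cone of an ordering, and this ordering is unique. -/
theorem stmt_10 {F₁ : Type*} [Field F₁] (h₁ : RingElemEquiv F₁ ℚ) :
    IsOrderingCone {x : F₁ | ∃ a b c d : F₁, x = a ^ 2 + b ^ 2 + c ^ 2 + d ^ 2} ∧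
      ∀ P : Set F₁, IsOrderingCone P →
        P = {x : F₁ | ∃ a b c d : F₁, x = a ^ 2 + b ^ 2 + c ^ 2 + d ^ 2} := by
  have hcone : IsOrderingCone (sumFourSquares F₁) :=
    h₁.isOrderingCone_sumFourSquares_iff.2 (Rat.sumFourSquares_eq ▸ isOrderingCone_nonneg ℚ)
  exact ⟨hcone, fun P hP => (hcone.eq_of_subset hP hP.sumFourSquares_subset).symm⟩
end

section
/- Let $F$ be a field containing an algebraically closed subfield $D$ (in particular, $F$ contains the algebraic closure of its prime field). Then $F$ has embedded residue: there exist an elementary extension $F^*$ of $F$ and a nontrivial valuation $v$ on $F^*$ such that $F^* v$ embeds into $F^*$. -/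
/-!
Upward Löwenheim–Skolem gives `F ⪯ F*` with `#F < #F*`, so the image `Ω` of `D` is an
algebraically closed subfield of `F*` different from `F*`.

The valuation comes from Chevalley's extension argument. By Zorn, take an `Ω`-algebra
homomorphism `φ : A → Ω` on a subalgebra `A ⊆ F*` admitting no proper extension. If `x` lies in a
local subring `B ⊇ A` whose maximal ideal contains `ker φ`, then some maximal ideal of `A[x]`
contains `ker φ`; its residue field is generated over `Ω` by the class of `x`, so it is `Ω` by
Zariski's lemma, `φ` extends to `A[x]`, and `x ∈ A`. Taking for `B` the localization of `A` at
`ker φ` shows that `A` is local with maximal ideal `ker φ`; taking any `B` dominating `A` shows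
that `A` is a valuation ring. Its residue field `A / ker φ ≅ Ω` embeds into `F*`, and `A ≠ F*`,
since otherwise the field homomorphism `φ` would be injective and `F* = Ω`.
-/

open FirstOrder

universe u

/-- A ring homomorphism is an elementary embedding for the language of rings. -/
def IsElementaryRingHom {F F' : Type*} [Ring F] [Ring F'] (f : F →+* F') : Prop :=
  letI := Ring.compatibleRingOfRing F
  letI := Ring.compatibleRingOfRing F'
  ∀ (n : ℕ) (φ : Language.ring.Formula (Fin n)) (v : Fin n → F),
    φ.Realize (f ∘ v) ↔ φ.Realize v

theorem IsAlgClosed.nonempty_algHom_of_finiteType (Ω L : Type*) [Field Ω] [IsAlgClosed Ω]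
    [Field L] [Algebra Ω L] [Algebra.FiniteType Ω L] : Nonempty (L →ₐ[Ω] Ω) :=
  have := finite_of_finite_type_of_isJacobsonRing Ω L
  ⟨(AlgEquiv.ofBijective (Algebra.ofId Ω L)
    IsAlgClosed.algebraMap_bijective_of_isIntegral).symm⟩

theorem Ideal.exists_algHom_le_ker {Ω B : Type*} [Field Ω] [IsAlgClosed Ω] [CommRing B]
    [Algebra Ω B] (M : Ideal B) [M.IsMaximal] [Algebra.FiniteType Ω (B ⧸ M)] :
    ∃ φ : B →ₐ[Ω] Ω, M ≤ RingHom.ker φ := by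
  let := Ideal.Quotient.field M
  obtain ⟨ψ⟩ := IsAlgClosed.nonempty_algHom_of_finiteType Ω (B ⧸ M)
  exact ⟨ψ.comp (Ideal.Quotient.mkₐ Ω M),
    fun a ha => by simp [Ideal.Quotient.eq_zero_iff_mem.mpr ha]⟩

theorem Subalgebra.le_adjoin_insert {R A : Type*} [CommSemiring R] [Semiring A] [Algebra R A]
    (S : Subalgebra R A) (x : A) : S ≤ Algebra.adjoin R (insert x (S : Set A)) :=
  fun _ ha => Algebra.subset_adjoin (Set.mem_insert_of_mem x ha)

theorem AlgHom.exists_extend_adjoin_insert {Ω A : Type*} [Field Ω] [IsAlgClosed Ω] [CommRing A]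
    [Algebra Ω A] {S : Subalgebra Ω A} (f : S →ₐ[Ω] Ω) (x : A)
    (hx : (RingHom.ker f).map (Subalgebra.inclusion (S.le_adjoin_insert x)) ≠ ⊤) :
    ∃ g : Algebra.adjoin Ω (insert x (S : Set A)) →ₐ[Ω] Ω,
      g.comp (Subalgebra.inclusion (S.le_adjoin_insert x)) = f := by
  set T := Algebra.adjoin Ω (insert x (S : Set A))
  set ι := Subalgebra.inclusion (S.le_adjoin_insert x)
  obtain ⟨M, hM, hkerM⟩ := Ideal.exists_le_maximal _ hx
  have hcongr (a : S) : ι a - algebraMap Ω T (f a) ∈ M := by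
    simpa [ι] using hkerM (Ideal.mem_map_of_mem ι (show a - algebraMap Ω S (f a) ∈ _ by simp))
  let q := Ideal.Quotient.mkₐ Ω M
  -- `S` maps into `Ω` modulo `M`, so the class of `x` generates `T ⧸ M`
  have hgen : Algebra.adjoin Ω {q ⟨x, Algebra.subset_adjoin (Set.mem_insert x _)⟩} = ⊤ := by
    rw [eq_top_iff, ← (AlgHom.range_eq_top q).mpr (Ideal.Quotient.mkₐ_surjective Ω M),
      ← Algebra.map_top, ← Algebra.adjoin_adjoin_coe_preimage, ← Algebra.adjoin_image,
      Algebra.adjoin_le_iff]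
    rintro _ ⟨s, hs | hs, rfl⟩
    · exact Algebra.subset_adjoin (congrArg q (Subtype.ext hs))
    · have : q s = algebraMap Ω _ (f ⟨s, hs⟩) := by
        rw [← sub_eq_zero, ← AlgHom.commutes q, ← map_sub]
        exact Ideal.Quotient.eq_zero_iff_mem.mpr (hcongr ⟨s, hs⟩)
      exact this ▸ Subalgebra.algebraMap_mem _ _
  have : Algebra.FiniteType Ω (T ⧸ M) := ⟨⟨{q ⟨x, _⟩}, by simpa using hgen⟩⟩
  obtain ⟨g, hg⟩ := M.exists_algHom_le_ker (Ω := Ω)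
  refine ⟨g, AlgHom.ext fun a => ?_⟩
  have := hg (hcongr a)
  rwa [RingHom.mem_ker, map_sub, g.commutes, sub_eq_zero] at this

structure PartialAlgHom (R A B : Type*) [CommSemiring R] [Semiring A] [Semiring B]
    [Algebra R A] [Algebra R B] where
  dom : Subalgebra R A
  toAlgHom : dom →ₐ[R] B

namespace PartialAlgHom

section Zorn

variable {R A B : Type*} [CommSemiring R] [Semiring A] [Semiring B] [Algebra R A] [Algebra R B]

instance : Preorder (PartialAlgHom R A B) where
  le f g := ∃ h : f.dom ≤ g.dom, g.toAlgHom.comp (Subalgebra.inclusion h) = f.toAlgHom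
  le_refl f := ⟨le_rfl, by ext; rfl⟩
  le_trans f g k := by
    rintro ⟨hfg, hfg'⟩ ⟨hgk, hgk'⟩
    exact ⟨hfg.trans hgk, by rw [← hfg', ← hgk']; rfl⟩

theorem exists_le_isMax (f : PartialAlgHom R A B) : ∃ g, f ≤ g ∧ IsMax g := by
  refine zorn_le_nonempty_Ici₀ f (fun c _ hc g hg => ?_) f le_rfl
  have : Nonempty c := ⟨⟨g, hg⟩⟩
  have hdir : Directed (· ≤ ·) fun i : c => i.1.dom :=
    hc.directed.mono_comp _ fun _ _ h => h.1
  have hcompat : ∀ (i j : c) (h : i.1.dom ≤ j.1.dom),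
      i.1.toAlgHom = j.1.toAlgHom.comp (Subalgebra.inclusion h) := by
    rintro ⟨i, hi⟩ ⟨j, hj⟩ hij
    obtain hle | ⟨hji, hji'⟩ := hc.total hi hj
    · exact hle.2.symm
    · ext x
      simp only [← hji', AlgHom.comp_apply]
      rfl
  refine ⟨⟨_, Subalgebra.iSupLift _ hdir (fun i => i.1.toAlgHom) hcompat _ le_rfl⟩,
    fun k hk => ⟨le_iSup (fun i : c => i.1.dom) ⟨k, hk⟩, ?_⟩⟩
  exact Subalgebra.iSupLift_comp_inclusion (dir := hdir) (hf := hcompat)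
    (i := (⟨k, hk⟩ : c)) _ _

end Zorn

variable {Ω K : Type*} [Field Ω] [IsAlgClosed Ω] [Field K] [Algebra Ω K]
  {f : PartialAlgHom Ω K Ω}

theorem localSubring_le_dom_of_isMax (hf : IsMax f) (B : LocalSubring K)
    (hB : f.dom.toSubring ≤ B.toSubring)
    (hker : RingHom.ker f.toAlgHom ≤
      (IsLocalRing.maximalIdeal B.toSubring).comap (Subring.inclusion hB)) :
    B.toSubring ≤ f.dom.toSubring := by
  intro x hx
  set T := Algebra.adjoin Ω (insert x (f.dom : Set K))
  have hTB : T.toSubring ≤ B.toSubring := by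
    rw [Algebra.adjoin_eq_ring_closure, Subring.closure_le]
    rintro _ (⟨c, rfl⟩ | rfl | hy)
    · exact hB (f.dom.algebraMap_mem c)
    · exact hx
    · exact hB hy
  have hproper :
      (RingHom.ker f.toAlgHom).map (Subalgebra.inclusion (f.dom.le_adjoin_insert x)) ≠ ⊤ := by
    refine ne_top_of_le_ne_top (Ideal.comap_ne_top (Subring.inclusion hTB : T →+* B.toSubring)
      (IsLocalRing.maximalIdeal.isMaximal _).ne_top) ?_
    rw [Ideal.map_le_iff_le_comap]
    exact fun a ha => hker ha
  obtain ⟨g, hg⟩ := f.toAlgHom.exists_extend_adjoin_insert x hproper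
  exact (hf (show f ≤ ⟨T, g⟩ from ⟨_, hg⟩)).1 (Algebra.subset_adjoin (Set.mem_insert x _))

theorem isUnit_of_isMax (hf : IsMax f) {a : f.dom} (ha : f.toAlgHom a ≠ 0) : IsUnit a := by
  let P : Ideal f.dom.toSubring := RingHom.ker (f.toAlgHom : f.dom →+* Ω)
  have : P.IsPrime := RingHom.ker_isPrime _
  let B := LocalSubring.ofPrime f.dom.toSubring P
  have hBf := localSubring_le_dom_of_isMax hf B (LocalSubring.le_ofPrime _ _)
    fun p hp => (IsLocalization.AtPrime.to_map_mem_maximal_iff B.toSubring P p).mpr hp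
  obtain ⟨⟨b, hb⟩, hab⟩ := isUnit_iff_exists_inv.mp
    (IsLocalization.map_units B.toSubring (⟨a, ha⟩ : P.primeCompl))
  exact isUnit_iff_exists_inv.mpr ⟨⟨b, hBf hb⟩, Subtype.ext congr(($hab).1)⟩

theorem isLocalRing_of_isMax (hf : IsMax f) : IsLocalRing f.dom := by
  refine IsLocalRing.of_isUnit_or_isUnit_one_sub_self fun a => ?_
  by_contra! h
  have h1 : f.toAlgHom a = 0 := by_contra fun h0 => h.1 (isUnit_of_isMax hf h0)
  have h2 : f.toAlgHom (1 - a) = 0 := by_contra fun h0 => h.2 (isUnit_of_isMax hf h0)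
  simp [h1] at h2

theorem mem_or_inv_mem_of_isMax (hf : IsMax f) (x : K) : x ∈ f.dom ∨ x⁻¹ ∈ f.dom := by
  let L : LocalSubring K := @LocalSubring.mk K _ f.dom.toSubring (isLocalRing_of_isMax hf)
  have hL : IsMax L := by
    intro B hLB
    have hBL := localSubring_le_dom_of_isMax hf B hLB.1 fun a ha =>
      (IsLocalRing.mem_maximalIdeal _).mpr fun hu => by
        have := (hLB.2.1 (a := a) hu).map f.toAlgHom
        simp_all
    exact (LocalSubring.toSubring_injective (le_antisymm hLB.1 hBL)).ge
  obtain ⟨O, hO⟩ := LocalSubring.exists_valuationRing_of_isMax hL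
  have hOL : O.toSubring = f.dom.toSubring := congrArg LocalSubring.toSubring hO
  have := O.mem_or_inv_mem x
  rwa [← ValuationSubring.mem_toSubring, ← ValuationSubring.mem_toSubring, hOL] at this

def valuationSubring (hf : IsMax f) : ValuationSubring K where
  toSubring := f.dom.toSubring
  mem_or_inv_mem' := mem_or_inv_mem_of_isMax hf

theorem valuationSubring_ne_top (hf : IsMax f) (h : ¬ Function.Surjective (algebraMap Ω K)) :
    valuationSubring hf ≠ ⊤ := by
  intro htop
  have hdom (y : K) : y ∈ f.dom :=
    (htop ▸ ValuationSubring.mem_top y : y ∈ valuationSubring hf)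
  refine h fun t => ⟨f.toAlgHom ⟨t, hdom t⟩, ?_⟩
  by_contra hne
  let u : f.dom := ⟨t, hdom t⟩ - algebraMap Ω f.dom (f.toAlgHom ⟨t, hdom t⟩)
  have hu : IsUnit u := isUnit_iff_exists_inv.mpr
    ⟨⟨(u : K)⁻¹, hdom _⟩, Subtype.ext (mul_inv_cancel₀ (sub_ne_zero.mpr (Ne.symm hne)))⟩
  simpa [u] using hu.map f.toAlgHom

theorem nonempty_residueField_hom (hf : IsMax f) :
    Nonempty (IsLocalRing.ResidueField (valuationSubring hf) →+* Ω) :=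
  ⟨Ideal.Quotient.lift _ (f.toAlgHom : f.dom →+* Ω) fun a ha =>
    by_contra fun h0 => (IsLocalRing.mem_maximalIdeal a).mp ha (isUnit_of_isMax hf h0)⟩

end PartialAlgHom

theorem exists_valuationSubring_ne_top_residueField_hom (Ω K : Type*) [Field Ω] [IsAlgClosed Ω]
    [Field K] [Algebra Ω K] (h : ¬ Function.Surjective (algebraMap Ω K)) :
    ∃ O : ValuationSubring K, O ≠ ⊤ ∧ Nonempty (IsLocalRing.ResidueField O →+* Ω) := by
  obtain ⟨f, -, hf⟩ := PartialAlgHom.exists_le_isMax ⟨⊥, (Algebra.botEquiv Ω K).toAlgHom⟩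
  exact ⟨_, f.valuationSubring_ne_top hf h, f.nonempty_residueField_hom hf⟩

section ElementaryExtension

open Language Ring Cardinal

theorem FirstOrder.Ring.CompatibleRing.toStructure_eq {R : Type*} [Add R] [Mul R] [Neg R]
    [One R] [Zero R] (c₁ c₂ : CompatibleRing R) : c₁.toStructure = c₂.toStructure := by
  ext n f x
  · cases f with
    | add => rw [c₁.funMap_add, c₂.funMap_add]
    | mul => rw [c₁.funMap_mul, c₂.funMap_mul]
    | neg => rw [c₁.funMap_neg, c₂.funMap_neg]
    | zero => rw [c₁.funMap_zero, c₂.funMap_zero]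
    | one => rw [c₁.funMap_one, c₂.funMap_one]
  · cases f

def FirstOrder.Language.Hom.toRingHom {R S : Type*} [Ring R] [Ring S] [CompatibleRing R]
    [CompatibleRing S] (g : R →[Language.ring] S) : R →+* S where
  toFun := g
  map_one' := by simpa using g.map_fun oneFunc ![]
  map_zero' := by simpa using g.map_fun zeroFunc ![]
  map_mul' x y := by simpa using g.map_fun mulFunc ![x, y]
  map_add' x y := by simpa using g.map_fun addFunc ![x, y]

theorem exists_isElementaryRingHom_card_lt (F : Type u) [Field F] [Infinite F] :
    ∃ (Fs : Type u) (i : Field Fs),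
      letI := i
      ∃ f : F →+* Fs, IsElementaryRingHom f ∧ #F < #Fs := by
  let := compatibleRingOfRing F
  have hcard : Cardinal.lift.{u} Language.ring.card ≤ Cardinal.lift.{0} (Order.succ #F) := by
    simpa [card_ring] using
      (natCast_lt_aleph0 (n := 5)).le.trans ((aleph0_le_mk F).trans (Order.le_succ _))
  obtain ⟨N, ⟨g⟩, hN⟩ := exists_elementaryEmbedding_card_eq_of_ge Language.ring F _ hcard
    (Cardinal.lift_le.mpr (Order.le_succ _))
  have : Theory.field.Model N := (g.theory_model_iff _).mp inferInstance
  let := FirstOrder.Field.fieldOfModelField N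
  let cN := FirstOrder.Field.compatibleRingOfModelField N
  refine ⟨N, inferInstance, g.toEmbedding.toHom.toRingHom, fun n φ v => ?_,
    hN ▸ Order.lt_succ _⟩
  rw [← g.map_formula φ v, CompatibleRing.toStructure_eq (compatibleRingOfRing N) cN]
  rfl

end ElementaryExtension

/-- A field containing an algebraically closed subfield has embedded residue: some elementary
extension `F ⪯ F*` carries a nontrivial valuation whose residue field embeds into `F*`. -/
theorem stmt_11 (F : Type u) [Field F] (D : Subfield F) (hD : IsAlgClosed ↥D) :
    ∃ (Fs : Type u) (i : Field Fs),
      letI := i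
      ∃ f : F →+* Fs, IsElementaryRingHom f ∧
        ∃ O : ValuationSubring Fs, O ≠ ⊤ ∧
          Nonempty (IsLocalRing.ResidueField ↥O →+* Fs) := by
  have : Infinite F := Infinite.of_injective _ D.subtype.injective
  obtain ⟨Fs, _, f, hf, hcard⟩ := exists_isElementaryRingHom_card_lt F
  let := (f.comp D.subtype).toAlgebra
  have hsurj : ¬ Function.Surjective (algebraMap D Fs) := fun h =>
    ((Cardinal.mk_le_of_surjective h).trans
      (Cardinal.mk_le_of_injective D.subtype.injective)).not_gt hcard
  obtain ⟨O, hO, ⟨φ⟩⟩ := exists_valuationSubring_ne_top_residueField_hom D Fs hsurj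
  exact ⟨Fs, _, f, hf, O, hO, ⟨(algebraMap D Fs).comp φ⟩⟩
end

section
/- A field $F$ admitting a nontrivial henselian valuation, which is perfect and such that the valued field is sufficiently saturated and equicharacteristic, has embedded residue: there is an embedding of the residue field $Fv$ into $F$. More precisely, if $(F,v)$ is an $\aleph_0$-saturated equicharacteristic henselian nontrivially valued field with $F$ perfect, then $Fv$ embeds into $F$. -/
open FirstOrder Language

/-- The language with a single unary relation symbol. -/
def predLang : Language :=
  ⟨fun _ => Empty, fun n => match n with | 1 => PUnit | _ => Empty⟩

/-- The one-sorted language of valued fields: the language of rings together with a unary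
predicate for the valuation ring. -/
def valLang : Language := Language.ring.sum predLang

/-- The valued-field structure on `K` induced by a valuation ring `O`. -/
noncomputable def valStructure (K : Type*) [Field K] (O : ValuationSubring K) :
    valLang.Structure K :=
  letI := Ring.compatibleRingOfRing K
  letI : predLang.Structure K :=
    { funMap := fun {n} f _ => f.elim
      RelMap := fun {n} r x =>
        match n, r, x with
        | 0, r, _ => r.elim
        | 1, _, x => x 0 ∈ O
        | _ + 2, r, _ => r.elim }
  Language.sumStructure _ _ K

/-- A structure is `κ`-saturated: every finitely satisfiable set of formulas in one free
variable with fewer than `κ` parameters is realized. -/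
def IsSaturatedIn (L : Language) (M : Type*) [L.Structure M] (κ : Cardinal) : Prop :=
  ∀ A : Set M, Cardinal.mk A < κ →
    ∀ S : Set ((L[[A]]).Formula (Fin 1)),
      (∀ t : Finset ((L[[A]]).Formula (Fin 1)), ↑t ⊆ S →
        ∃ x : M, ∀ φ ∈ t, Formula.Realize φ (fun _ => x)) →
      ∃ x : M, ∀ φ ∈ S, Formula.Realize φ (fun _ => x)


open Polynomial
set_option synthInstance.maxHeartbeats 1000000
set_option maxHeartbeats 1000000

section Helpers

variable {F : Type*} [Field F] (O : ValuationSubring F)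

private lemma aux_inv_mem_s13 {x : ↥O} (hx : IsLocalRing.residue ↥O x ≠ 0) :
    (↑x : F)⁻¹ ∈ O := by
  obtain ⟨u, hu⟩ := (IsLocalRing.residue_ne_zero_iff_isUnit x).mp hx
  have h1 : ((↑(u⁻¹) : ↥O) : F) * (x : F) = 1 := by
    rw [← hu]
    exact_mod_cast congrArg (Subtype.val) u.inv_mul
  rw [inv_eq_of_mul_eq_one_left h1]
  exact SetLike.coe_mem _

private lemma closure_subset {s : Set F} (h1 : s ⊆ ↑O)
    (h2 : ∀ x ∈ Subring.closure s, x ≠ 0 → x⁻¹ ∈ O) :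
    ↑(Subfield.closure s) ⊆ (O : Set F) := by
  intro x hx
  rw [SetLike.mem_coe, Subfield.mem_closure_iff] at hx
  obtain ⟨y, hy, z, hz, rfl⟩ := hx
  have hsub : Subring.closure s ≤ O.toSubring := Subring.closure_le.mpr h1
  by_cases hz0 : z = 0
  · simp only [hz0, div_zero]
    exact zero_mem O
  · rw [div_eq_mul_inv]
    exact mul_mem (hsub hy) (h2 z hz hz0)

/-- The inclusion of a subfield contained in `O` into `O`. -/
private def incl (K : Subfield F) (hKO : (K : Set F) ⊆ ↑O) : ↥K →+* ↥O where
  toFun x := ⟨x.1, hKO x.2⟩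
  map_one' := rfl
  map_mul' _ _ := rfl
  map_zero' := rfl
  map_add' _ _ := rfl

private lemma adjoin_algebraic_subset (K : Subfield F) (hKO : (K : Set F) ⊆ ↑O)
    {d : F} (hd : d ∈ O) (halg : IsAlgebraic ↥K d) :
    ↑(Subfield.closure (↑K ∪ {d})) ⊆ (O : Set F) := by
  have hrange : Set.range (algebraMap ↥K F) = (K : Set F) := Subtype.range_coe
  have hsubring : Subring.closure ((K : Set F) ∪ {d}) = (Algebra.adjoin ↥K {d}).toSubring := by
    rw [Algebra.adjoin_eq_ring_closure, hrange]
  haveI : Algebra.IsIntegral ↥K (Algebra.adjoin ↥K {d}) :=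
    Algebra.IsIntegral.adjoin (by rintro x rfl; exact halg.isIntegral)
  apply closure_subset O
  · exact Set.union_subset hKO (by simpa using hd)
  · intro x hx hx0
    rw [hsubring] at hx
    have hxA : x ∈ Algebra.adjoin ↥K {d} := hx
    have hint : IsAlgebraic ↥K x :=
      ((Algebra.IsIntegral.isIntegral (R := ↥K) (⟨x, hxA⟩ : Algebra.adjoin ↥K {d})).map
        (Algebra.adjoin ↥K {d}).val).isAlgebraic
    have hinv : x⁻¹ ∈ Algebra.adjoin ↥K {d} :=
      (Algebra.adjoin ↥K {d}).inv_mem_of_algebraic (x := ⟨x, hxA⟩) hint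
    have hsub : Subring.closure ((K : Set F) ∪ {d}) ≤ O.toSubring :=
      Subring.closure_le.mpr (Set.union_subset hKO (by simpa using hd))
    exact hsub (by rw [hsubring]; exact hinv)


private lemma adjoin_trans_subset (K : Subfield F) (hKO : (K : Set F) ⊆ ↑O) (t : ↥O)
    (htr : ∀ p : Polynomial ↥K,
      Polynomial.eval₂ ((IsLocalRing.residue ↥O).comp (incl O K hKO))
        (IsLocalRing.residue ↥O t) p = 0 → p = 0) :
    ↑(Subfield.closure (↑K ∪ {(t : F)})) ⊆ (O : Set F) := by
  apply closure_subset O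
  · exact Set.union_subset hKO (by simpa using t.2)
  · intro x hx hx0
    obtain ⟨p, hp⟩ : ∃ p : Polynomial ↥K, Polynomial.eval₂ K.subtype (↑t : F) p = x := by
      have hle : Subring.closure ((K : Set F) ∪ {(t : F)}) ≤
          (Polynomial.eval₂RingHom K.subtype (t : F)).range := by
        apply Subring.closure_le.mpr
        rintro y (hy | hy)
        · exact ⟨Polynomial.C ⟨y, hy⟩, Polynomial.eval₂_C _ _⟩
        · rw [Set.mem_singleton_iff] at hy
          exact ⟨Polynomial.X, by rw [Polynomial.coe_eval₂RingHom, Polynomial.eval₂_X, hy]⟩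
      exact hle hx
    have hcomp : O.subtype.comp (incl O K hKO) = K.subtype := RingHom.ext fun _ => rfl
    have hcoe : ((Polynomial.eval₂ (incl O K hKO) t p : ↥O) : F) = x := by
      rw [← hp]
      calc (O.subtype (Polynomial.eval₂ (incl O K hKO) t p))
          = Polynomial.eval₂ (O.subtype.comp (incl O K hKO)) (O.subtype t) p :=
            Polynomial.hom_eval₂ _ _ _ _
        _ = Polynomial.eval₂ K.subtype (↑t : F) p := by rw [hcomp]; rfl
    have hres : IsLocalRing.residue ↥O (Polynomial.eval₂ (incl O K hKO) t p) =
        Polynomial.eval₂ ((IsLocalRing.residue ↥O).comp (incl O K hKO))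
          (IsLocalRing.residue ↥O t) p := Polynomial.hom_eval₂ _ _ _ _
    have hpne : p ≠ 0 := by
      intro h
      apply hx0
      rw [← hp, h, Polynomial.eval₂_zero]
    have hne : IsLocalRing.residue ↥O (Polynomial.eval₂ (incl O K hKO) t p) ≠ 0 := by
      intro h0
      exact hpne (htr p (by rw [← hres]; exact h0))
    have := aux_inv_mem_s13 O hne
    rwa [hcoe] at this

private lemma hensel_lift (hhens : HenselianLocalRing ↥O) (K : Subfield F)
    (hKO : (K : Set F) ⊆ ↑O) (g₁ : Polynomial ↥K) (hmon : g₁.Monic) (hsep : g₁.Separable)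
    (b : IsLocalRing.ResidueField ↥O)
    (hb : (g₁.map ((IsLocalRing.residue ↥O).comp (incl O K hKO))).eval b = 0) :
    ∃ c : ↥O, Polynomial.eval₂ K.subtype (↑c : F) g₁ = 0 ∧ IsLocalRing.residue ↥O c = b := by
  haveI := hhens
  set res := IsLocalRing.residue ↥O with hresdef
  set gK := res.comp (incl O K hKO) with hgK
  obtain ⟨a₀, ha₀⟩ := IsLocalRing.residue_surjective (R := ↥O) b
  set G : Polynomial ↥O := g₁.map (incl O K hKO) with hG
  have hGmon : G.Monic := hmon.map _
  have hGres : G.map res = g₁.map gK := by rw [hG, Polynomial.map_map, hgK]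
  have hres_eval : ∀ (P : Polynomial ↥O) (x : ↥O), res (P.eval x) = (P.map res).eval (res x) := by
    intro P x
    rw [Polynomial.eval_map, Polynomial.eval₂_at_apply]
  have h1 : G.eval a₀ ∈ IsLocalRing.maximalIdeal ↥O := by
    have : res (G.eval a₀) = 0 := by rw [hres_eval, ha₀, hGres]; exact hb
    exact Ideal.Quotient.eq_zero_iff_mem.mp this
  have hsepmap : (g₁.map gK).Separable := hsep.map
  have hder : (g₁.map gK).derivative.eval b ≠ 0 := by
    obtain ⟨u, v, huv⟩ := hsepmap
    intro h0
    have := congrArg (Polynomial.eval b) huv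
    simp only [Polynomial.eval_add, Polynomial.eval_mul, hb, h0, mul_zero, add_zero,
      Polynomial.eval_one] at this
    exact zero_ne_one this
  have h2 : IsUnit (G.derivative.eval a₀) := by
    apply (IsLocalRing.residue_ne_zero_iff_isUnit _).mp
    have : res (G.derivative.eval a₀) = (g₁.map gK).derivative.eval b := by
      rw [hres_eval, ha₀, ← Polynomial.derivative_map, hGres]
    rw [this]
    exact hder
  obtain ⟨c, hcroot, hcsub⟩ := HenselianLocalRing.is_henselian G hGmon a₀ h1 h2
  refine ⟨c, ?_, ?_⟩
  · have hcomp : O.subtype.comp (incl O K hKO) = K.subtype := RingHom.ext fun _ => rfl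
    have : O.subtype (G.eval c) = Polynomial.eval₂ K.subtype (↑c : F) g₁ := by
      rw [hG, Polynomial.eval_map, Polynomial.hom_eval₂, hcomp]
      rfl
    rw [← this, hcroot.eq_zero, map_zero]
  · have : res (c - a₀) = 0 := Ideal.Quotient.eq_zero_iff_mem.mpr hcsub
    rw [map_sub, sub_eq_zero] at this
    rw [this, ha₀]

end Helpers

/-- An `ℵ₀`-saturated equicharacteristic henselian nontrivially valued perfect field has
embedded residue: the residue field embeds into the field itself. -/
theorem stmt_13 (F : Type*) [Field F] [PerfectField F] (O : ValuationSubring F)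
    (hnt : O ≠ ⊤) (hhens : HenselianLocalRing ↥O)
    (hequi : ringChar F = ringChar (IsLocalRing.ResidueField ↥O))
    (hsat : letI := valStructure F O; IsSaturatedIn valLang F Cardinal.aleph0) :
    Nonempty (IsLocalRing.ResidueField ↥O →+* F) := by
  classical
  haveI := hhens
  -- the prime subfield is contained in `O`
  have hbot : ((⊥ : Subfield F) : Set F) ⊆ (O : Set F) := by
    intro x hx
    rw [← Subfield.closure_empty, SetLike.mem_coe, Subfield.mem_closure_iff] at hx
    obtain ⟨y, hy, z, hz, rfl⟩ := hx
    rw [Subring.closure_empty, Subring.mem_bot] at hy hz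
    obtain ⟨m, rfl⟩ := hy
    obtain ⟨n, rfl⟩ := hz
    by_cases hn : ((n : ℤ) : F) = 0
    · rw [hn, div_zero]; exact zero_mem O
    · have hmm : ((m : ℤ) : F) ∈ O := by
        have h : (((m : ℤ) : ↥O) : F) = ((m : ℤ) : F) := map_intCast O.subtype m
        rw [← h]; exact SetLike.coe_mem _
      have hni : (((n : ℤ) : F))⁻¹ ∈ O := by
        have hcast : (((n : ℤ) : ↥O) : F) = ((n : ℤ) : F) := map_intCast O.subtype n
        have hres : IsLocalRing.residue ↥O ((n : ℤ) : ↥O) ≠ 0 := by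
          rw [map_intCast]
          intro h0
          haveI hF : CharP F (ringChar F) := ringChar.charP F
          haveI hk : CharP (IsLocalRing.ResidueField ↥O) (ringChar F) := by
            rw [hequi]; exact ringChar.charP _
          rw [CharP.intCast_eq_zero_iff _ (ringChar F)] at h0
          exact hn ((CharP.intCast_eq_zero_iff F (ringChar F) n).mpr h0)
        have h2 := aux_inv_mem_s13 O hres
        rwa [hcast] at h2
      rw [div_eq_mul_inv]
      exact mul_mem hmm hni
  -- a maximal subfield of `F` contained in `O`
  obtain ⟨K, hKO, hKmax⟩ : ∃ K : Subfield F, ((K : Set F) ⊆ (O : Set F)) ∧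
      ∀ K' : Subfield F, ((K' : Set F) ⊆ (O : Set F)) → K ≤ K' → K' = K := by
    obtain ⟨K, -, hKmax⟩ := zorn_le_nonempty₀ {K : Subfield F | (K : Set F) ⊆ (O : Set F)}
      (fun c hcs hc y hy => by
        haveI : Nonempty c := ⟨⟨y, hy⟩⟩
        have hdir : Directed (· ≤ ·) (fun i : c => (i : Subfield F)) :=
          directedOn_iff_directed.mp hc.directedOn
        refine ⟨⨆ i : c, (i : Subfield F), ?_, ?_⟩
        · intro x hx
          rw [SetLike.mem_coe, Subfield.mem_iSup_of_directed hdir] at hx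
          obtain ⟨i, hi⟩ := hx
          exact hcs i.2 hi
        · intro z hz
          exact le_iSup (fun i : c => (i : Subfield F)) ⟨z, hz⟩) ⊥ hbot
    exact ⟨K, hKmax.1, fun K' hK' hle => le_antisymm (hKmax.2 hK' hle) hle⟩
  set gK : ↥K →+* IsLocalRing.ResidueField ↥O :=
    (IsLocalRing.residue ↥O).comp (incl O K hKO) with hgK
  have hginj : Function.Injective gK := gK.injective
  suffices hsurj : Function.Surjective gK by
    exact ⟨K.subtype.comp (RingEquiv.ofBijective gK ⟨hginj, hsurj⟩).symm.toRingHom⟩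
  intro a
  by_contra ha
  -- it suffices to find a lift `D` of `a` generating a subfield of `O` over `K`
  suffices hD : ∃ D : ↥O, IsLocalRing.residue ↥O D = a ∧
      ((Subfield.closure ((K : Set F) ∪ {(D : F)}) : Set F) ⊆ (O : Set F)) by
    obtain ⟨D, hDa, hcl⟩ := hD
    have hKle : K ≤ Subfield.closure ((K : Set F) ∪ {(D : F)}) :=
      fun x hx => Subfield.subset_closure (Or.inl hx)
    have heq := hKmax _ hcl hKle
    have hDK : (D : F) ∈ K := by
      rw [← heq]
      exact Subfield.subset_closure (Or.inr rfl)
    apply ha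
    refine ⟨⟨(D : F), hDK⟩, ?_⟩
    have h : (incl O K hKO) ⟨(D : F), hDK⟩ = D := Subtype.ext rfl
    show IsLocalRing.residue ↥O ((incl O K hKO) ⟨(D : F), hDK⟩) = a
    rw [h, hDa]
  by_cases htr : ∀ p : Polynomial ↥K, Polynomial.eval₂ gK a p = 0 → p = 0
  · -- transcendental residue: lift arbitrarily
    obtain ⟨t, ht⟩ := IsLocalRing.residue_surjective (R := ↥O) a
    refine ⟨t, ht, adjoin_trans_subset O K hKO t ?_⟩
    intro p hp
    apply htr p
    rw [ht] at hp
    exact hp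
  · -- algebraic residue
    push_neg at htr
    obtain ⟨p0, hp0ker, hp0ne⟩ := htr
    set θ : Polynomial ↥K →+* IsLocalRing.ResidueField ↥O := Polynomial.eval₂RingHom gK a with hθ
    have hp0ker' : p0 ∈ RingHom.ker θ := hp0ker
    haveI hprime : (RingHom.ker θ).IsPrime := RingHom.ker_isPrime θ
    have hne : RingHom.ker θ ≠ ⊥ := fun h => hp0ne (by rwa [h, Ideal.mem_bot] at hp0ker')
    set q0 := Submodule.IsPrincipal.generator (RingHom.ker θ) with hq0
    have hq0p : Prime q0 := Submodule.IsPrincipal.prime_generator_of_isPrime _ hne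
    have hq0mem : q0 ∈ RingHom.ker θ := Submodule.IsPrincipal.generator_mem _
    set q := q0 * Polynomial.C (q0.leadingCoeff)⁻¹ with hq
    have hqmon : q.Monic := Polynomial.monic_mul_leadingCoeff_inv hq0p.ne_zero
    have hlc : IsUnit (Polynomial.C (q0.leadingCoeff)⁻¹) :=
      Polynomial.isUnit_C.mpr (isUnit_iff_ne_zero.mpr
        (inv_ne_zero (Polynomial.leadingCoeff_ne_zero.mpr hq0p.ne_zero)))
    have hassoc : Associated q0 q := ⟨hlc.unit, by rw [IsUnit.unit_spec]⟩
    have hqirr : Irreducible q := hassoc.irreducible hq0p.irreducible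
    have hqker : θ q = 0 := by
      rw [hq, map_mul, RingHom.mem_ker.mp hq0mem, zero_mul]
    have hqeval : (q.map gK).eval a = 0 := by
      rw [Polynomial.eval_map]
      exact hqker
    haveI hFchar : CharP F (ringChar F) := ringChar.charP F
    haveI hKchar : CharP ↥K (ringChar F) :=
      K.subtype.charP Subtype.coe_injective (ringChar F)
    haveI hkchar : CharP (IsLocalRing.ResidueField ↥O) (ringChar F) := by
      rw [hequi]; exact ringChar.charP _
    rcases eq_or_ne (ringChar F) 0 with hc0 | hcp
    · -- characteristic zero
      haveI : CharP ↥K 0 := by rw [← hc0]; exact hKchar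
      haveI : CharZero ↥K := CharP.charP_to_charZero ↥K
      have hqsep : q.Separable := hqirr.separable
      obtain ⟨c, hc1, hc2⟩ := hensel_lift O hhens K hKO q hqmon hqsep a hqeval
      refine ⟨c, hc2, adjoin_algebraic_subset O K hKO c.2 ⟨q, hqmon.ne_zero, ?_⟩⟩
      show Polynomial.aeval ((c : F)) q = 0
      rw [Polynomial.aeval_def, show algebraMap ↥K F = K.subtype from rfl]
      exact hc1
    · -- positive characteristic
      have hccp : (ringChar F).Prime := (CharP.char_is_prime_or_zero F (ringChar F)).resolve_right hcp
      haveI : Fact (ringChar F).Prime := ⟨hccp⟩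
      haveI : ExpChar F (ringChar F) := ExpChar.prime hccp
      haveI : ExpChar (IsLocalRing.ResidueField ↥O) (ringChar F) := ExpChar.prime hccp
      obtain ⟨n, g₁, hg₁sep, hg₁exp⟩ :=
        Polynomial.exists_separable_of_irreducible (ringChar F) hqirr hcp
      have hpow : (0 : ℕ) < ringChar F ^ n := pow_pos hccp.pos n
      have hg₁mon : g₁.Monic := (Polynomial.monic_expand_iff hpow).mp (hg₁exp ▸ hqmon)
      have hbeval : (g₁.map gK).eval (a ^ ringChar F ^ n) = 0 := by
        have h1 : ((Polynomial.expand ↥K (ringChar F ^ n) g₁).map gK) =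
            Polynomial.expand _ (ringChar F ^ n) (g₁.map gK) := Polynomial.map_expand
        have h2 := hqeval
        rw [← hg₁exp, h1, Polynomial.expand_eval] at h2
        exact h2
      obtain ⟨c, hc1, hc2⟩ := hensel_lift O hhens K hKO g₁ hg₁mon hg₁sep _ hbeval
      set d : F := (iterateFrobeniusEquiv F (ringChar F) n).symm ((c : F)) with hd
      have hdpow : d ^ ringChar F ^ n = ((c : F)) := by
        have h := (iterateFrobeniusEquiv F (ringChar F) n).apply_symm_apply ((c : F))
        rwa [iterateFrobeniusEquiv_def] at h
      have hdO : d ∈ O := by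
        rw [← ValuationSubring.valuation_le_one_iff]
        have hcle : O.valuation ((c : F)) ≤ 1 := O.valuation_le_one c
        rw [← hdpow, map_pow] at hcle
        exact (pow_le_one_iff hpow.ne').mp hcle
      have hDpow : (⟨d, hdO⟩ : ↥O) ^ ringChar F ^ n = c := by
        apply Subtype.ext
        rw [SubmonoidClass.coe_pow]
        exact hdpow
      have hresD : IsLocalRing.residue ↥O ⟨d, hdO⟩ = a := by
        apply iterateFrobenius_inj (IsLocalRing.ResidueField ↥O) (ringChar F) n
        rw [iterateFrobenius_def, iterateFrobenius_def, ← map_pow, hDpow, hc2]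
      refine ⟨⟨d, hdO⟩, hresD, adjoin_algebraic_subset O K hKO hdO ⟨q, hqmon.ne_zero, ?_⟩⟩
      show Polynomial.aeval d q = 0
      rw [Polynomial.aeval_def, show algebraMap ↥K F = K.subtype from rfl]
      rw [← hg₁exp, Polynomial.eval₂_eq_eval_map, Polynomial.map_expand, Polynomial.expand_eval,
        hdpow, ← Polynomial.eval₂_eq_eval_map]
      exact hc1
end
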